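/- Let λ ⊢ n, S a standard Young tableau of shape λ, and T a bijective filling of λ by 1,…,n. Then (1/s_T^S)·Σ_{τ∈R(T)} τ·p_T^S is a sum of pairwise distinct monomials, each occurring with coefficient exactly 1, all homogeneous of degree cc(S) and having the same multiset of exponents as p_T^S; the monomial p_T^S is among them; and no other monomial in this sum lies in the C(T)-orbit of p_T^S. -/

import Mathlib

open MvPolynomial

noncomputable section

namespace HigherSpecht

open scoped Classical

/-- A tableau: a filling of the plane (row, column), `0`-indexed, with `0` outside the diagram. -/
abbrev Tab := ℕ × ℕ → ℕ

/-- A permutation of `ℕ` represents an element of `Sₙ` (acting on `{1, …, n}`)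
when it fixes `0` and everything above `n`. -/
def SuppIn (n : ℕ) (w : Equiv.Perm ℕ) : Prop := ∀ i, i = 0 ∨ n < i → w i = i

/-- Descending locations of a permutation (one-line notation `w 1, …, w n`). -/
def DslSet (n : ℕ) (w : Equiv.Perm ℕ) : Finset ℕ :=
  (Finset.Ioo 0 n).filter fun i => w (i + 1) < w i

/-- Ascending locations of a permutation. -/
def AslSet (n : ℕ) (w : Equiv.Perm ℕ) : Finset ℕ :=
  (Finset.Ioo 0 n).filter fun i => w i < w (i + 1)

/-- The row in which the entry `i` shows up in a tableau. -/
def rowIdx (T : Tab) (i : ℕ) : ℕ := sInf {r | ∃ c, T (r, c) = i}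

/-- The column in which the entry `i` shows up in a tableau. -/
def colIdx (T : Tab) (i : ℕ) : ℕ := sInf {c | T (rowIdx T i, c) = i}

/-- The box containing the entry `i`. -/
def posOf (T : Tab) (i : ℕ) : ℕ × ℕ := (rowIdx T i, colIdx T i)

/-- Descending indices of a (standard) tableau: `i` with the row of `i+1` strictly below
the row of `i`. -/
def DsiSet (n : ℕ) (T : Tab) : Finset ℕ :=
  (Finset.Ioo 0 n).filter fun i => rowIdx T i < rowIdx T (i + 1)

/-- `Dsi^c`, the complemented descent set `{n - i | i ∈ Dsi}`. -/
def Dsic (n : ℕ) (T : Tab) : Finset ℕ := (DsiSet n T).image fun i => n - i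

/-- The entry of `ct_J(S)` at a box `c`: the number of elements of `J` smaller than the
entry of `S` at `c`. -/
def ctEntry (T : Tab) (J : Finset ℕ) (c : ℕ × ℕ) : ℕ := (J.filter fun j => j < T c).card

/-- The cocharge tableau `ct(S)` of a standard tableau. -/
def ctTab (n : ℕ) (T : Tab) : Tab := fun c => ctEntry T (DsiSet n T) c

/-- The (total) cocharge `cc(S)`: the sum of the entries of `ct(S)`. -/
def ccStat (n : ℕ) (T : Tab) : ℕ :=
  ∑ i ∈ Finset.Icc 1 n, ctEntry T (DsiSet n T) (posOf T i)

/-- `T` is a bijective filling of the given set of cells by `1, …, n` (`n` the number of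
cells), with `0` outside. -/
def IsFillingF (cells : Finset (ℕ × ℕ)) (T : Tab) : Prop :=
  (∀ c, c ∉ cells → T c = 0) ∧ Set.BijOn T ↑cells (Set.Icc 1 cells.card)

/-- A bijective filling of a Young diagram. -/
def IsFilling (μ : YoungDiagram) (T : Tab) : Prop := IsFillingF μ.cells T

/-- A standard Young tableau of shape `μ`: entries strictly increase along rows and columns. -/
def IsStandard (μ : YoungDiagram) (T : Tab) : Prop :=
  IsFilling μ T ∧ ∀ c₁ ∈ μ.cells, ∀ c₂ ∈ μ.cells,
    c₁ ≠ c₂ → c₁.1 ≤ c₂.1 → c₁.2 ≤ c₂.2 → T c₁ < T c₂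

/-! ### Robinson–Schensted -/

/-- Row insertion: insert `x` into a row, returning the new row and the bumped entry. -/
def rowInsert : ℕ → List ℕ → List ℕ × Option ℕ
  | x, [] => ([x], none)
  | x, y :: ys =>
    if x < y then (x :: ys, some y)
    else
      let p := rowInsert x ys
      (y :: p.1, p.2)

/-- Insertion of an entry into a tableau, given as a list of rows. -/
def tabInsert : List (List ℕ) → ℕ → List (List ℕ)
  | [], x => [[x]]
  | r :: rs, x =>
    match rowInsert x r with
    | (r', none) => r' :: rs
    | (r', some y) => r' :: tabInsert rs y

/-- One-line notation of `w ∈ Sₙ`. -/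
def oneLine (n : ℕ) (w : Equiv.Perm ℕ) : List ℕ := (List.range n).map fun i => w (i + 1)

/-- The insertion tableau of the first `m` letters of `w`, as a list of rows. -/
def PtabListPart (n : ℕ) (w : Equiv.Perm ℕ) (m : ℕ) : List (List ℕ) :=
  ((oneLine n w).take m).foldl tabInsert []

/-- Entry of a list-of-rows tableau at a (0-indexed) cell. -/
def listEntry (t : List (List ℕ)) (c : ℕ × ℕ) : ℕ := (t.getD c.1 []).getD c.2 0

/-- The Robinson–Schensted insertion tableau `P(w)`. -/
def Ptab (n : ℕ) (w : Equiv.Perm ℕ) : Tab := fun c => listEntry (PtabListPart n w n) c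

/-- The Robinson–Schensted recording tableau `Q(w)`: the entry of a cell is the step at
which the cell is added to the shape. -/
def Qtab (n : ℕ) (w : Equiv.Perm ℕ) : Tab := fun c =>
  sInf {m | listEntry (PtabListPart n w m) c ≠ 0}

/-! ### Schützenberger evacuation -/

/-- One step of a jeu de taquin slide into the hole at `c`. -/
def slideOnce (T : Tab) (c : ℕ × ℕ) : Tab × (ℕ × ℕ) :=
  let rc : ℕ × ℕ := (c.1, c.2 + 1)
  let dc : ℕ × ℕ := (c.1 + 1, c.2)
  if T rc = 0 ∧ T dc = 0 then (T, c)
  else if T dc = 0 ∨ (T rc ≠ 0 ∧ T rc < T dc) then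
    (Function.update (Function.update T c (T rc)) rc 0, rc)
  else
    (Function.update (Function.update T c (T dc)) dc 0, dc)

/-- Jeu de taquin slide (with fuel). -/
def slide : ℕ → Tab → ℕ × ℕ → Tab × (ℕ × ℕ)
  | 0, T, c => (T, c)
  | k + 1, T, c =>
    let p := slideOnce T c
    if p.2 = c then (T, c) else slide k p.1 p.2

/-- The Schützenberger evacuation: repeatedly delete the minimal entry, slide into the hole,
decrement the remaining entries, and record the vacated cell. -/
def evacAux : ℕ → Tab → Tab
  | 0, _ => fun _ => 0
  | m + 1, T =>
    let c0 := posOf T 1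
    let p := slide (m + 1) (Function.update T c0 0) c0
    Function.update (evacAux m fun c => p.1 c - 1) p.2 (m + 1)

/-- The evacuation tableau `ev S` of a standard tableau with `n` boxes. -/
def evac (n : ℕ) (T : Tab) : Tab := evacAux n T

/-- `Q̃(w) := ev (Q w)`. -/
def Qt (n : ℕ) (w : Equiv.Perm ℕ) : Tab := evac n (Qtab n w)

/-! ### Row and column groups, higher Specht polynomials -/

/-- The identification of `Fin n` with `{1, …, n} ⊆ ℕ`. -/
def finShift (n : ℕ) : Fin n ≃ {i : ℕ // 1 ≤ i ∧ i ≤ n} where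
  toFun j := ⟨(j : ℕ) + 1, by have := j.isLt; omega⟩
  invFun i := ⟨(i : ℕ) - 1, by have := i.2; omega⟩
  left_inv j := by apply Fin.ext; simp
  right_inv i := by apply Subtype.ext; have := i.2; simp; omega

/-- Embedding of the permutations of `Fin n` into permutations of `ℕ` (acting on `{1, …, n}`). -/
def embedPerm (n : ℕ) (σ : Equiv.Perm (Fin n)) : Equiv.Perm ℕ :=
  σ.extendDomain (finShift n)

/-- The row group `R(T)` of a filling, as a finset of permutations of `Fin n`. -/
def rowFinset (n : ℕ) (T : Tab) : Finset (Equiv.Perm (Fin n)) :=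
  Finset.univ.filter fun τ => ∀ i ∈ Finset.Icc 1 n, rowIdx T (embedPerm n τ i) = rowIdx T i

/-- The column group `C(T)` of a filling, as a finset of permutations of `Fin n`. -/
def colFinset (n : ℕ) (T : Tab) : Finset (Equiv.Perm (Fin n)) :=
  Finset.univ.filter fun σ => ∀ i ∈ Finset.Icc 1 n, colIdx T (embedPerm n σ i) = colIdx T i

/-- The row group `R(T)` as a set of permutations of `ℕ`. -/
def rowGroupSet (n : ℕ) (T : Tab) : Set (Equiv.Perm ℕ) :=
  {w | SuppIn n w ∧ ∀ i ∈ Finset.Icc 1 n, rowIdx T (w i) = rowIdx T i}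

/-- The column group `C(T)` as a set of permutations of `ℕ`. -/
def colGroupSet (n : ℕ) (T : Tab) : Set (Equiv.Perm ℕ) :=
  {w | SuppIn n w ∧ ∀ i ∈ Finset.Icc 1 n, colIdx T (w i) = colIdx T i}

/-- The Young symmetrizer `ε_T = Σ_{σ ∈ C(T)} Σ_{τ ∈ R(T)} sgn(σ) σ τ` acting on polynomials
(permutations acting by permuting the variables). -/
def epsAct (n : ℕ) (T : Tab) (p : MvPolynomial ℕ ℚ) : MvPolynomial ℕ ℚ :=
  ∑ σ ∈ colFinset n T, ∑ τ ∈ rowFinset n T,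
    (Equiv.Perm.sign σ : ℤ) • rename (⇑(embedPerm n σ * embedPerm n τ)) p

/-- The monomial `p_T^S = Π_i x_i^{h_i}`, where `h_i` is the entry of `ct S` in the box of
`T` containing `i`. -/
def pTS (n : ℕ) (T S : Tab) : MvPolynomial ℕ ℚ :=
  ∏ i ∈ Finset.Icc 1 n, X i ^ ctEntry S (DsiSet n S) (posOf T i)

/-- `s_T^S`: the order of the stabilizer of `p_T^S` in `R(T)`. -/
def sTS (n : ℕ) (T S : Tab) : ℕ :=
  ((rowFinset n T).filter fun τ =>
    rename (⇑(embedPerm n τ)) (pTS n T S) = pTS n T S).card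

/-- The higher Specht polynomial `F_T^S := ε_T p_T^S / s_T^S`. -/
def FTS (n : ℕ) (T S : Tab) : MvPolynomial ℕ ℚ :=
  ((sTS n T S : ℚ)⁻¹) • epsAct n T (pTS n T S)

/-- The higher Specht polynomial `F_w := F_{P(w)}^{Q̃(w)}` of a permutation. -/
def Fw (n : ℕ) (w : Equiv.Perm ℕ) : MvPolynomial ℕ ℚ := FTS n (Ptab n w) (Qt n w)

/-- The elementary symmetric polynomial `e_r` in the variables `x_1, …, x_n`. -/
def esym (n r : ℕ) : MvPolynomial ℕ ℚ :=
  ∑ s ∈ (Finset.Icc 1 n).powersetCard r, ∏ i ∈ s, X i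

/-- The representation `V^S`: the span of the higher Specht polynomials `F_T^S` over all
bijective fillings `T` of the given cells. -/
def VS (n : ℕ) (cells : Finset (ℕ × ℕ)) (S : Tab) : Submodule ℚ (MvPolynomial ℕ ℚ) :=
  Submodule.span ℚ {p | ∃ T : Tab, IsFillingF cells T ∧ p = FTS n T S}

/-- Multiplication of a subspace of polynomials by a fixed polynomial. -/
def polyMul (q : MvPolynomial ℕ ℚ) (V : Submodule ℚ (MvPolynomial ℕ ℚ)) :
    Submodule ℚ (MvPolynomial ℕ ℚ) :=
  Submodule.map (LinearMap.mulLeft ℚ q) V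

/-- The symmetric multiplier `Π_r e_r^{h_r}`. -/
def eProd (n : ℕ) (h : ℕ → ℕ) : MvPolynomial ℕ ℚ := ∏ r ∈ Finset.Icc 1 n, esym n r ^ h r

/-- `V^S_h := (Π_r e_r^{h_r}) V^S`. -/
def VSh (n : ℕ) (cells : Finset (ℕ × ℕ)) (S : Tab) (h : ℕ → ℕ) :
    Submodule ℚ (MvPolynomial ℕ ℚ) :=
  polyMul (eProd n h) (VS n cells S)

/-! ### The representations `R_{n,I}` -/

/-- For `i ∈ I`, `r_i := #{j ∈ {1,…,n-1} \ I : j < i}`. -/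
def rIdxI (n : ℕ) (I : Finset ℕ) (i : ℕ) : ℕ :=
  ((Finset.Ioo 0 n \ I).filter fun j => j < i).card

/-- The vector `h^S_I`, whose `r`-th entry (for `r ≥ 1`) is `#{i ∈ I \ Dsi^c(S) : r_i = r}`. -/
def hSI (n : ℕ) (I : Finset ℕ) (S : Tab) : ℕ → ℕ := fun r =>
  if 1 ≤ r then ((I \ Dsic n S).filter fun i => rIdxI n I i = r).card else 0

/-- The indicator vector `h(I,S)` of the set `I \ Dsi^c(S)`. -/
def hInd (n : ℕ) (I : Finset ℕ) (S : Tab) : ℕ → ℕ := fun r =>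
  if r ∈ I \ Dsic n S then 1 else 0

/-- `F_{w,I} := F_w · Π_{i ∈ I \ Dsl(w)} e_{r_i}`. -/
def FwI (n : ℕ) (I : Finset ℕ) (w : Equiv.Perm ℕ) : MvPolynomial ℕ ℚ :=
  Fw n w * ∏ i ∈ I \ DslSet n w, esym n (rIdxI n I i)

/-- The homogeneous version `F^hom_{w,I} := F_w · Π_{i ∈ I \ Dsl(w)} e_i`. -/
def FwIhom (n : ℕ) (I : Finset ℕ) (w : Equiv.Perm ℕ) : MvPolynomial ℕ ℚ :=
  Fw n w * ∏ i ∈ I \ DslSet n w, esym n i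

/-- The representation `R_{n,I}`: span of the `F_{w,I}` over `w` with `Dsl(w) ⊆ I`. -/
def RnI (n : ℕ) (I : Finset ℕ) : Submodule ℚ (MvPolynomial ℕ ℚ) :=
  Submodule.span ℚ {p | ∃ w : Equiv.Perm ℕ, SuppIn n w ∧ DslSet n w ⊆ I ∧ p = FwI n I w}

/-- The homogeneous representation `R^hom_{n,I}`. -/
def RnIhom (n : ℕ) (I : Finset ℕ) : Submodule ℚ (MvPolynomial ℕ ℚ) :=
  Submodule.span ℚ {p | ∃ w : Equiv.Perm ℕ, SuppIn n w ∧ DslSet n w ⊆ I ∧ p = FwIhom n I w}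

/-- The index type for the decomposition of `R_{n,I}`: pairs of a partition `λ ⊢ n` and a
standard Young tableau `S` of shape `λ` with `Dsi^c(S) ⊆ I`. -/
def SIdx (n : ℕ) (I : Finset ℕ) : Type :=
  {q : YoungDiagram × Tab // q.1.cells.card = n ∧ IsStandard q.1 q.2 ∧ Dsic n q.2 ⊆ I}

/-! ### Ordered set partitions -/

/-- The cumulative values `j_h` attached to a subset `I ⊆ {1,…,n-1}` (`j_0 = 0`,
`j_h` the `h`-th smallest element, `j_{|I|+1} = n`). -/
def jval (n : ℕ) (I : Finset ℕ) (h : ℕ) : ℕ :=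
  if h = 0 then 0 else if h ≤ I.card then (I.sort (· ≤ ·)).getD (h - 1) 0 else n

/-- The composition `comp_n I`, as a function of the index `0 ≤ h ≤ |I|`. -/
def compFun (n : ℕ) (I : Finset ℕ) (h : ℕ) : ℕ := jval n I (h + 1) - jval n I h

/-- The set `OP_{n,I}` of ordered set partitions of `{1,…,n}` into `|I| + 1` blocks whose
sizes are given by `comp_n I` (blocks indexed by `ℕ`, empty from index `|I| + 1` on). -/
def OPset (n : ℕ) (I : Finset ℕ) : Set (ℕ → Finset ℕ) :=
  {B | (∀ h, I.card + 1 ≤ h → B h = ∅) ∧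
       (∀ h₁ h₂, h₁ ≠ h₂ → Disjoint (B h₁) (B h₂)) ∧
       (∀ h ≤ I.card, (B h).card = compFun n I h) ∧
       Finset.Icc 1 n = (Finset.range (I.card + 1)).biUnion B}

/-- The natural action of a permutation on an ordered set partition. -/
def permOP (w : Equiv.Perm ℕ) (B : ℕ → Finset ℕ) : ℕ → Finset ℕ := fun h => (B h).image w

/-! ### The quotient `R_{n,k}` -/

/-- Elementary symmetric polynomials in `Fin n` variables. -/
def esymFin (n r : ℕ) : MvPolynomial (Fin n) ℚ :=
  ∑ s ∈ (Finset.univ : Finset (Fin n)).powersetCard r, ∏ i ∈ s, X i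

/-- The ideal defining `R_{n,k}`: generated by `x_i^k` and `e_r`, `n-k+1 ≤ r ≤ n`. -/
def Jnk (n k : ℕ) : Ideal (MvPolynomial (Fin n) ℚ) :=
  Ideal.span ((Set.range fun i : Fin n => (X i : MvPolynomial (Fin n) ℚ) ^ k) ∪
    {p | ∃ r, n - k + 1 ≤ r ∧ r ≤ n ∧ p = esymFin n r})

/-- The map sending `x_i` (for `1 ≤ i ≤ n`) to the corresponding variable of
`ℚ[x_1, …, x_n]`, and all other variables to `0`. -/
def toFin (n : ℕ) : MvPolynomial ℕ ℚ →ₐ[ℚ] MvPolynomial (Fin n) ℚ :=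
  aeval fun i => if h : 1 ≤ i ∧ i ≤ n then X (⟨i - 1, by omega⟩ : Fin n) else 0

/-- The quotient projection onto `R_{n,k}`. -/
def projNK (n k : ℕ) : MvPolynomial ℕ ℚ →ₐ[ℚ] (MvPolynomial (Fin n) ℚ ⧸ Jnk n k) :=
  (Ideal.Quotient.mkₐ ℚ (Jnk n k)).comp (toFin n)

/-! ### Corners, insertions and the induction/extension operators -/

/-- `v` is an external corner of `μ`. -/
def IsCorner (μ : YoungDiagram) (v : ℕ × ℕ) : Prop :=
  v ∉ μ.cells ∧ ∃ ν : YoungDiagram, ν.cells = insert v μ.cells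

/-- `S +̃ v := ev (ev S + v)`, where `+ v` places the entry `n + 1` in the box `v`. -/
def Sadd (n : ℕ) (S : Tab) (v : ℕ × ℕ) : Tab :=
  evac (n + 1) (Function.update (evac n S) v (n + 1))

/-- `δ^{S,v}`: `0` if `v` lies strictly below the row of `n` in `ev S`, and `1` otherwise. -/
def deltaSV (n : ℕ) (S : Tab) (v : ℕ × ℕ) : ℕ :=
  if rowIdx (evac n S) n < v.1 then 0 else 1

/-- `h + δ·1_t`: add `δ` to the coordinate `t` of `h` when `t ≥ 1`; do nothing for `t = 0`. -/
def addAt (h : ℕ → ℕ) (t δ : ℕ) : ℕ → ℕ := fun r =>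
  if r = t ∧ 1 ≤ t then h r + δ else h r

/-- The induction operator on a single summand:
`Ind_t V^S_h := ⊕_{v ∈ EC(λ)} V^{S +̃ v}_{h + δ^{S,v}·1_t}`. -/
def IndVSh (t n : ℕ) (μ : YoungDiagram) (S : Tab) (h : ℕ → ℕ) :
    Submodule ℚ (MvPolynomial ℕ ℚ) :=
  ⨆ v : ℕ × ℕ, ⨆ _ : IsCorner μ v,
    VSh (n + 1) (insert v μ.cells) (Sadd n S v) (addAt h t (deltaSV n S v))

/-- The extension operator on a single summand:
`Ext V^S_h := ⊕_{v ∈ EC(λ), δ^{S,v} = 1} V^{S +̃ v}_h`. -/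
def ExtVSh (n : ℕ) (μ : YoungDiagram) (S : Tab) (h : ℕ → ℕ) :
    Submodule ℚ (MvPolynomial ℕ ℚ) :=
  ⨆ v : ℕ × ℕ, ⨆ _ : IsCorner μ v ∧ deltaSV n S v = 1,
    VSh (n + 1) (insert v μ.cells) (Sadd n S v) h

/-- `Ind_t R_{n,I}`, applied summand-by-summand to the decomposition of `R_{n,I}`. -/
def IndR (t n : ℕ) (I : Finset ℕ) : Submodule ℚ (MvPolynomial ℕ ℚ) :=
  ⨆ q : SIdx n I, IndVSh t n q.1.1 q.1.2 (hSI n I q.1.2)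

/-- `Ext R_{n,I}`, applied summand-by-summand. -/
def ExtR (n : ℕ) (I : Finset ℕ) : Submodule ℚ (MvPolynomial ℕ ℚ) :=
  ⨆ q : SIdx n I, ExtVSh n q.1.1 q.1.2 (hSI n I q.1.2)

/-- `Ind_t R^hom_{n,I}`, applied summand-by-summand. -/
def IndRhom (t n : ℕ) (I : Finset ℕ) : Submodule ℚ (MvPolynomial ℕ ℚ) :=
  ⨆ q : SIdx n I, IndVSh t n q.1.1 q.1.2 (hInd n I q.1.2)

/-- `Ext R^hom_{n,I}`, applied summand-by-summand. -/
def ExtRhom (n : ℕ) (I : Finset ℕ) : Submodule ℚ (MvPolynomial ℕ ℚ) :=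
  ⨆ q : SIdx n I, ExtVSh n q.1.1 q.1.2 (hInd n I q.1.2)

/-- The lift `R̃_{n,k} = ⊕_{|I| = k-1} R_{n,I}` of the quotient `R_{n,k}`. -/
def Rtil (n k : ℕ) : Submodule ℚ (MvPolynomial ℕ ℚ) :=
  ⨆ I : Finset ℕ, ⨆ _ : I ⊆ Finset.Ioo 0 n ∧ I.card + 1 = k, RnI n I

/-! ### The extended column group -/

/-- The length of column `c` of a tableau. -/
def colLenT (n : ℕ) (T : Tab) (c : ℕ) : ℕ :=
  ((Finset.range (n + 1)).filter fun r => T (r, c) ≠ 0).card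

/-- `q_a`: the number of columns of length `> a` (columns of length `a` occupy the
`0`-indexed columns `q_a, …, q_a + t_a - 1`). -/
def qaT (n : ℕ) (T : Tab) (a : ℕ) : ℕ :=
  ((Finset.range (n + 1)).filter fun c => a < colLenT n T c).card

/-- `t_a`: the number of columns of length `a`. -/
def taT (n : ℕ) (T : Tab) (a : ℕ) : ℕ :=
  ((Finset.range (n + 1)).filter fun c => colLenT n T c = a).card

/-- The function underlying the permutation `η_T`: the entry in row `j` of column `q_a + i`
is sent to the entry in row `j` of column `q_a + η(i)`; everything else is fixed. -/
def etaFun (n : ℕ) (T : Tab) (a : ℕ) (η : Equiv.Perm ℕ) : ℕ → ℕ := fun m =>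
  let c := colIdx T m
  if 1 ≤ m ∧ m ≤ n ∧ qaT n T a ≤ c ∧ c < qaT n T a + taT n T a then
    T (rowIdx T m, qaT n T a + η (c - qaT n T a))
  else m

/-- The set of the permutations `η_T` (over all `a ≥ 1` and all `η ∈ S_{t_a}`). -/
def etaSet (n : ℕ) (T : Tab) : Set (Equiv.Perm ℕ) :=
  {w | ∃ a, 1 ≤ a ∧ ∃ η : Equiv.Perm ℕ, (∀ i, taT n T a ≤ i → η i = i) ∧
    ⇑w = etaFun n T a η}

/-- The subgroup generated by the permutations `η_T` (a copy of `Π_a S_{t_a}`). -/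
def etaSubgroup (n : ℕ) (T : Tab) : Subgroup (Equiv.Perm ℕ) :=
  Subgroup.closure (etaSet n T)

/-- The column group `C(T)` as a subgroup. -/
def colSubgroup (n : ℕ) (T : Tab) : Subgroup (Equiv.Perm ℕ) :=
  Subgroup.closure (colGroupSet n T)

/-- The extended column group `C̃(T)`, generated by `C(T)` and the `η_T`. -/
def extColSubgroup (n : ℕ) (T : Tab) : Subgroup (Equiv.Perm ℕ) :=
  Subgroup.closure (colGroupSet n T ∪ etaSet n T)

/-- The sign of a permutation of `ℕ` supported on `{1, …, n}`. -/
def signOn (n : ℕ) (σ : Equiv.Perm ℕ) : ℤ :=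
  if h : ∃ τ : Equiv.Perm (Fin n), embedPerm n τ = σ then
    (Equiv.Perm.sign h.choose : ℤ) else 0

/-! ### Semistandard tableaux, (generalized) cocharge tableaux -/

/-- A semistandard filling of the given cells: rows weakly increase, columns strictly
increase (entries outside the cells are normalized to `0`). -/
def IsSSYTOn (cells : Finset (ℕ × ℕ)) (C : Tab) : Prop :=
  (∀ c ∉ cells, C c = 0) ∧
  (∀ c₁ ∈ cells, ∀ c₂ ∈ cells, c₁.1 = c₂.1 → c₁.2 ≤ c₂.2 → C c₁ ≤ C c₂) ∧
  (∀ c₁ ∈ cells, ∀ c₂ ∈ cells, c₁.2 = c₂.2 → c₁.1 < c₂.1 → C c₁ < C c₂)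

/-- A generalized cocharge tableau with entries exactly `{0, …, k-1}`. -/
def IsGCT (cells : Finset (ℕ × ℕ)) (C : Tab) (k : ℕ) : Prop :=
  IsSSYTOn cells C ∧ (∀ c ∈ cells, C c < k) ∧ ∀ h < k, ∃ c ∈ cells, C c = h

/-- The type of a generalized cocharge tableau: the set of cumulative multiplicities
`#{c : C c < h}` for `1 ≤ h ≤ k - 1`. -/
def gctType (cells : Finset (ℕ × ℕ)) (C : Tab) (k : ℕ) : Finset ℕ :=
  (Finset.Ico 1 k).image fun h => (cells.filter fun c => C c < h).card

/-- The standardization of a semistandard tableau: entries are replaced by `1, …, n`,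
processing the values in increasing order and, for equal values, from left to right. -/
def stdz (cells : Finset (ℕ × ℕ)) (C : Tab) : Tab := fun c =>
  if c ∈ cells then
    (cells.filter fun c' => C c' < C c ∨
      (C c' = C c ∧ (c'.2 < c.2 ∨ (c'.2 = c.2 ∧ c'.1 ≤ c.1)))).card
  else 0

/-- A cocharge tableau of shape `μ`: one of the form `ct S` for a standard `S`. -/
def IsCCT (μ : YoungDiagram) (C : Tab) : Prop :=
  ∃ S : Tab, IsStandard μ S ∧ ctTab μ.cells.card S = C

/-- `k` for a tableau: one more than the maximal entry. -/
def kOf (cells : Finset (ℕ × ℕ)) (C : Tab) : ℕ := cells.sup C + 1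

/-- `Dsp^c(C) := {n - i : i ∈ J}`, `J` the type of the cocharge tableau `C`. -/
def Dspc (n : ℕ) (cells : Finset (ℕ × ℕ)) (C : Tab) : Finset ℕ :=
  (gctType cells C (kOf cells C)).image fun i => n - i

/-- The entry sum `Σ(C)`. -/
def entrySum (cells : Finset (ℕ × ℕ)) (C : Tab) : ℕ := ∑ c ∈ cells, C c

/-- `C +̂ v := ct (ct⁻¹(C) +̃ v)`, where `ct⁻¹` is the standardization. -/
def Cadd (n : ℕ) (μ : YoungDiagram) (C : Tab) (v : ℕ × ℕ) : Tab :=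
  ctTab (n + 1) (Sadd n (stdz μ.cells C) v)

/-- The standard Young tableau `S⁰` of shape `μ` filling the rows consecutively. -/
def rowWordTab (μ : YoungDiagram) : Tab := fun c =>
  if c ∈ μ.cells then (∑ r ∈ Finset.range c.1, μ.rowLen r) + c.2 + 1 else 0

/-- The word of an ordered set partition: the blocks listed in order, each sorted
increasingly. -/
def opWord (k : ℕ) (B : ℕ → Finset ℕ) : List ℕ :=
  (List.range k).foldr (fun h acc => (B h).sort (· ≤ ·) ++ acc) []

/-- Renaming the variables of a power series along a permutation. -/
def permSeries (g : Equiv.Perm ℕ) (F : MvPowerSeries ℕ ℚ) : MvPowerSeries ℕ ℚ :=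
  fun m => F (Finsupp.mapDomain ⇑g⁻¹ m)

/-!
Write `d` for the exponent vector of `p_T^S`, so that `p_T^S = x^d` and `τ · p_T^S = x^(τ · d)`.
The coefficient of `x^m` in `Σ_{τ ∈ R(T)} τ · p_T^S` is the number of `τ ∈ R(T)` with
`τ · d = m`, which is `0` or the order `s_T^S` of the stabilizer of `d`: this gives the
coefficients, the degree and the exponent multisets. For the last claim, suppose
`σ · d = τ · d` with `σ ∈ C(T)`, `τ ∈ R(T)`. Going down the rows of `T`, the entries of `ct(S)`
strictly increase down each column, so on a row that `σ` has not yet been shown to fix,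
`σ⁻¹` can only raise the exponents, while `τ⁻¹` merely permutes them; comparing sums over the
row forces `σ⁻¹` to fix it too. Hence `σ · d = d`.
-/

end HigherSpecht

open Finset

-- A permutation `g` of the variables acts on exponent vectors by `g • d = d.mapDomain g`.
attribute [local instance] Finsupp.comapSMul Finsupp.comapMulAction

theorem Nat.exists_lt_apply_succ_of_apply_lt {f : ℕ → ℕ} {a b : ℕ} (hab : a ≤ b)
    (h : f a < f b) : ∃ j, a ≤ j ∧ j < b ∧ f j < f (j + 1) := by
  by_contra! hcon
  have hle : ∀ k, a ≤ k → k ≤ b → f k ≤ f a := by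
    intro k hk
    induction k, hk using Nat.le_induction with
    | base => exact fun _ => le_rfl
    | succ k hak ih => exact fun hkb => (hcon k hak (by omega)).trans (ih (by omega))
  exact absurd (hle b hab le_rfl) (not_le.2 h)

theorem Finset.card_filter_lt_lt_card_filter_lt_of_mem {J : Finset ℕ} {a b j : ℕ} (hj : j ∈ J)
    (haj : a ≤ j) (hjb : j < b) : #{x ∈ J | x < a} < #{x ∈ J | x < b} := by
  refine card_lt_card ((ssubset_iff_of_subset ?_).2 ⟨j, ?_, ?_⟩)
  · intro x hx
    simp only [mem_filter] at hx ⊢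
    exact ⟨hx.1, by omega⟩
  · simp [hj, hjb]
  · simp [haj]

theorem Finset.map_perm_eq_self_of_mapsTo {α : Type*} {s : Finset α} {g : Equiv.Perm α}
    (h : ∀ i ∈ s, g i ∈ s) : s.map g.toEmbedding = s :=
  map_eq_of_subset fun _ hx => by
    obtain ⟨i, hi, rfl⟩ := mem_map.1 hx
    exact h i hi

theorem Finset.sum_comp_perm_of_mapsTo {α M : Type*} [AddCommMonoid M] {s : Finset α}
    {g : Equiv.Perm α} (h : ∀ i ∈ s, g i ∈ s) (f : α → M) :
    ∑ i ∈ s, f (g i) = ∑ i ∈ s, f i := by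
  conv_rhs => rw [← map_perm_eq_self_of_mapsTo h, sum_map]
  rfl

theorem Finset.map_val_comp_perm_of_mapsTo {α β : Type*} {s : Finset α} {g : Equiv.Perm α}
    (h : ∀ i ∈ s, g i ∈ s) (f : α → β) :
    s.val.map (fun i => f (g i)) = s.val.map f := by
  conv_rhs => rw [← map_perm_eq_self_of_mapsTo h, map_val, Multiset.map_map]
  rfl

theorem Finset.card_filter_smul_eq_card_filter_smul_eq_self {H G X : Type*} [Group H] [Group G]
    [MulAction G X] [DecidableEq X] (φ : H →* G) {R : Finset H}
    (hmul : ∀ a ∈ R, ∀ b ∈ R, a * b ∈ R) (hinv : ∀ a ∈ R, a⁻¹ ∈ R) (x : X) {h₀ : H}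
    (h₀R : h₀ ∈ R) :
    #{h ∈ R | φ h • x = φ h₀ • x} = #{h ∈ R | φ h • x = x} := by
  refine card_nbij' (h₀⁻¹ * ·) (h₀ * ·) (fun h hh => ?_) (fun h hh => ?_)
    (fun h _ => by group) (fun h _ => by group)
  · simp only [coe_filter, Set.mem_ofPred_eq] at hh ⊢
    refine ⟨hmul _ (hinv _ h₀R) _ hh.1, ?_⟩
    rw [map_mul, mul_smul, hh.2, map_inv, inv_smul_smul]
  · simp only [coe_filter, Set.mem_ofPred_eq] at hh ⊢
    exact ⟨hmul _ h₀R _ hh.1, by rw [map_mul, mul_smul, hh.2]⟩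

theorem MvPolynomial.rename_monomial_perm {K : Type*} [CommSemiring K] (g : Equiv.Perm ℕ)
    (d : ℕ →₀ ℕ) (r : K) : rename ⇑g (monomial d r) = monomial (g • d) r := by
  rw [rename_monomial, Finsupp.comapSMul_def]
  rfl

theorem MvPolynomial.coeff_sum_rename_monomial_one {K H : Type*} [CommSemiring K] (R : Finset H)
    (f : H → Equiv.Perm ℕ) (d m : ℕ →₀ ℕ) :
    coeff m (∑ h ∈ R, rename ⇑(f h) (monomial d (1 : K))) = #{h ∈ R | f h • d = m} := by
  simp only [rename_monomial_perm, coeff_sum, coeff_monomial]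
  rw [sum_boole]

namespace HigherSpecht

namespace IsFillingF

variable {cells : Finset (ℕ × ℕ)} {T : Tab}

theorem posOf_apply (hT : IsFillingF cells T) {c : ℕ × ℕ} (hc : c ∈ cells) :
    posOf T (T c) = c := by
  have hT_eq : ∀ c', T c' = T c ↔ c' = c := by
    refine fun c' => ⟨fun h => ?_, fun h => h ▸ rfl⟩
    by_cases hc' : c' ∈ cells
    · exact hT.2.2.1 hc' hc h
    · have := (hT.2.1 hc).1
      rw [hT.1 c' hc'] at h
      omega
  have hrow : rowIdx T (T c) = c.1 := by
    simp only [rowIdx, hT_eq, Prod.ext_iff, exists_eq_right, Set.ofPred_eq_eq_singleton,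
      csInf_singleton]
  have hcol : colIdx T (T c) = c.2 := by
    simp only [colIdx, hrow, hT_eq, Prod.ext_iff, true_and, Set.ofPred_eq_eq_singleton,
      csInf_singleton]
  rw [posOf, hrow, hcol]

theorem posOf_spec (hT : IsFillingF cells T) {i : ℕ} (hi : i ∈ Icc 1 #cells) :
    posOf T i ∈ cells ∧ T (posOf T i) = i := by
  obtain ⟨c, hc, rfl⟩ := hT.2.2.2 (Set.mem_Icc.2 (mem_Icc.1 hi))
  rw [hT.posOf_apply hc]
  exact ⟨hc, rfl⟩

theorem injOn_posOf (hT : IsFillingF cells T) : Set.InjOn (posOf T) (Icc 1 #cells) :=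
  fun i hi j hj hij => by
    rw [← (hT.posOf_spec hi).2, hij, (hT.posOf_spec hj).2]

theorem sum_posOf {M : Type*} [AddCommMonoid M] (hT : IsFillingF cells T) (f : ℕ × ℕ → M) :
    ∑ i ∈ Icc 1 #cells, f (posOf T i) = ∑ c ∈ cells, f c := by
  refine sum_nbij' (posOf T) T (fun i hi => (hT.posOf_spec hi).1)
    (fun c hc => mem_Icc.2 (hT.2.1 hc)) (fun i hi => (hT.posOf_spec hi).2)
    (fun c hc => hT.posOf_apply hc) (fun _ _ => rfl)

end IsFillingF

theorem ctEntry_lt_of_col_eq_of_row_lt {μ : YoungDiagram} {S : Tab} (hS : IsStandard μ S)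
    {p q : ℕ × ℕ} (hp : p ∈ μ.cells) (hq : q ∈ μ.cells) (hcol : p.2 = q.2) (hrow : p.1 < q.1) :
    ctEntry S (DsiSet #μ.cells S) p < ctEntry S (DsiSet #μ.cells S) q := by
  have hpq : S p < S q := hS.2 p hp q hq (fun h => by simp [h] at hrow) hrow.le hcol.le
  have hrows : rowIdx S (S p) < rowIdx S (S q) := by
    change (posOf S (S p)).1 < (posOf S (S q)).1
    rwa [hS.1.posOf_apply hp, hS.1.posOf_apply hq]
  obtain ⟨j, hpj, hjq, hdesc⟩ := Nat.exists_lt_apply_succ_of_apply_lt hpq.le hrows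
  have hj : j ∈ DsiSet #μ.cells S := by
    have h1 := (hS.1.2.1 hp).1
    have h2 := (hS.1.2.1 hq).2
    simp only [DsiSet, mem_filter, mem_Ioo]
    exact ⟨⟨by omega, by omega⟩, hdesc⟩
  exact card_filter_lt_lt_card_filter_lt_of_mem hj hpj hjq

theorem SuppIn.inv_apply_mem_Icc {n : ℕ} {σ : Equiv.Perm ℕ} (hσ : SuppIn n σ) {i : ℕ}
    (hi : i ∈ Icc 1 n) : σ⁻¹ i ∈ Icc 1 n := by
  by_contra h
  have hfix := hσ (σ⁻¹ i) (by simp only [mem_Icc] at h hi ⊢; omega)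
  rw [← Equiv.Perm.mul_apply, mul_inv_cancel, Equiv.Perm.one_apply] at hfix
  exact h (hfix ▸ hi)

section embedPerm

variable {n : ℕ}

theorem embedPerm_mem_Icc (σ : Equiv.Perm (Fin n)) {i : ℕ} (hi : i ∈ Icc 1 n) :
    embedPerm n σ i ∈ Icc 1 n := by
  rw [mem_Icc, embedPerm,
    Equiv.Perm.extendDomain_apply_subtype (p := fun j => 1 ≤ j ∧ j ≤ n) _ _ (mem_Icc.1 hi)]
  exact (finShift n _).2

theorem embedPerm_one : embedPerm n 1 = 1 :=
  Equiv.Perm.extendDomain_one _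

theorem embedPerm_mul (σ τ : Equiv.Perm (Fin n)) :
    embedPerm n (σ * τ) = embedPerm n σ * embedPerm n τ :=
  (Equiv.Perm.extendDomain_mul _ σ τ).symm

theorem embedPerm_inv (σ : Equiv.Perm (Fin n)) : embedPerm n σ⁻¹ = (embedPerm n σ)⁻¹ :=
  (Equiv.Perm.extendDomain_inv _ _).symm

variable {T : Tab}

theorem one_mem_rowFinset : (1 : Equiv.Perm (Fin n)) ∈ rowFinset n T := by
  simp [rowFinset, embedPerm_one]

theorem mul_mem_rowFinset {σ τ : Equiv.Perm (Fin n)} (hσ : σ ∈ rowFinset n T)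
    (hτ : τ ∈ rowFinset n T) : σ * τ ∈ rowFinset n T := by
  simp only [rowFinset, mem_filter, mem_univ, true_and] at hσ hτ ⊢
  intro i hi
  rw [embedPerm_mul, Equiv.Perm.mul_apply, hσ _ (embedPerm_mem_Icc τ hi), hτ _ hi]

theorem inv_mem_rowFinset {τ : Equiv.Perm (Fin n)} (hτ : τ ∈ rowFinset n T) :
    τ⁻¹ ∈ rowFinset n T := by
  simp only [rowFinset, mem_filter, mem_univ, true_and] at hτ ⊢
  intro i hi
  have h := hτ _ (embedPerm_mem_Icc τ⁻¹ hi)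
  rw [embedPerm_inv, ← Equiv.Perm.mul_apply, mul_inv_cancel, Equiv.Perm.one_apply] at h
  exact h.symm

theorem map_embedPerm_smul (σ : Equiv.Perm (Fin n)) (d : ℕ →₀ ℕ) :
    (Icc 1 n).val.map ⇑(embedPerm n σ • d) = (Icc 1 n).val.map ⇑d := by
  simp only [Finsupp.comapSMul_apply, ← embedPerm_inv]
  exact map_val_comp_perm_of_mapsTo (fun i hi => embedPerm_mem_Icc σ⁻¹ hi) d

end embedPerm

theorem apply_eq_self_of_comp_colPerm_eq_comp_rowPerm {α : Type*} {I : Finset α}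
    {pos : α → ℕ × ℕ} (hpos : Set.InjOn pos I) {d : α → ℕ}
    (hd : ∀ i ∈ I, ∀ j ∈ I, (pos i).2 = (pos j).2 → (pos i).1 < (pos j).1 → d i < d j)
    {σ τ : Equiv.Perm α} (hσ : ∀ i ∈ I, σ i ∈ I ∧ (pos (σ i)).2 = (pos i).2)
    (hτ : ∀ i ∈ I, τ i ∈ I ∧ (pos (τ i)).1 = (pos i).1) (h : ∀ i ∈ I, d (σ i) = d (τ i)) :
    ∀ i ∈ I, σ i = i := by
  suffices ∀ r, ∀ i ∈ I, (pos i).1 = r → σ i = i from fun i hi => this _ i hi rfl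
  intro r
  induction r using Nat.strong_induction_on with
  | _ r ih =>
  set F := I.filter fun i => (pos i).1 = r
  -- rows above `r` are fixed, so `σ` can only move an entry of row `r` down its column
  have hlt : ∀ i ∈ F, σ i ≠ i → d i < d (σ i) := by
    intro i hi hne
    obtain ⟨hiI, hir⟩ := mem_filter.1 hi
    obtain ⟨hσI, hσcol⟩ := hσ i hiI
    refine hd i hiI (σ i) hσI hσcol.symm ?_
    rcases lt_trichotomy (pos (σ i)).1 r with hr | hr | hr
    · exact absurd (σ.injective (ih _ hr (σ i) hσI rfl)) hne
    · exact absurd (hpos hσI hiI (Prod.ext (hr.trans hir.symm) hσcol)) hne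
    · omega
  have hle : ∀ i ∈ F, d i ≤ d (σ i) := fun i hi =>
    (eq_or_ne (σ i) i).elim (fun he => by rw [he]) fun hne => (hlt i hi hne).le
  have hsum : ∑ i ∈ F, d i = ∑ i ∈ F, d (σ i) := by
    rw [sum_congr rfl fun i hi => h i (mem_filter.1 hi).1]
    refine (sum_comp_perm_of_mapsTo (fun i hi => ?_) d).symm
    obtain ⟨hiI, hir⟩ := mem_filter.1 hi
    exact mem_filter.2 ⟨(hτ i hiI).1, (hτ i hiI).2.trans hir⟩
  have heq := (sum_eq_sum_iff_of_le hle).1 hsum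
  intro i hi hir
  by_contra hne
  have hiF : i ∈ F := mem_filter.2 ⟨hi, hir⟩
  exact (hlt i hiF hne).ne (heq i hiF)

def ctExp (n : ℕ) (T S : Tab) : ℕ →₀ ℕ :=
  ∑ i ∈ Icc 1 n, Finsupp.single i (ctEntry S (DsiSet n S) (posOf T i))

def rowOrbitSum (n : ℕ) (T S : Tab) : MvPolynomial ℕ ℚ :=
  ((sTS n T S : ℚ)⁻¹) • ∑ τ ∈ rowFinset n T, rename (⇑(embedPerm n τ)) (pTS n T S)

section ctExp

variable {n : ℕ} {T S : Tab}

theorem ctExp_apply_of_mem {i : ℕ} (hi : i ∈ Icc 1 n) :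
    ctExp n T S i = ctEntry S (DsiSet n S) (posOf T i) := by
  simp only [ctExp, Finsupp.finsetSum_apply, Finsupp.single_apply, sum_ite_eq', if_pos hi]

theorem pTS_eq_monomial : pTS n T S = monomial (ctExp n T S) 1 := by
  rw [pTS, ctExp, monomial_sum_one]
  exact prod_congr rfl fun i _ => X_pow_eq_monomial

theorem sTS_eq_card :
    sTS n T S = #{τ ∈ rowFinset n T | embedPerm n τ • ctExp n T S = ctExp n T S} := by
  simp only [sTS, pTS_eq_monomial, rename_monomial_perm,
    (monomial_left_injective one_ne_zero).eq_iff]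

theorem coeff_rowOrbitSum (m : ℕ →₀ ℕ) :
    (rowOrbitSum n T S).coeff m =
      if ∃ τ ∈ rowFinset n T, embedPerm n τ • ctExp n T S = m then 1 else 0 := by
  have hs : (sTS n T S : ℚ) ≠ 0 := by
    rw [sTS_eq_card, Nat.cast_ne_zero, ← pos_iff_ne_zero, card_pos]
    exact ⟨1, mem_filter.2 ⟨one_mem_rowFinset, by rw [embedPerm_one, one_smul]⟩⟩
  rw [rowOrbitSum, coeff_smul, pTS_eq_monomial, coeff_sum_rename_monomial_one, smul_eq_mul]
  split_ifs with h
  · obtain ⟨τ, hτ, rfl⟩ := h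
    have hcard : #{σ ∈ rowFinset n T | embedPerm n σ • ctExp n T S =
        embedPerm n τ • ctExp n T S} = sTS n T S :=
      (card_filter_smul_eq_card_filter_smul_eq_self (Equiv.Perm.extendDomainHom (finShift n))
        (fun _ ha _ hb => mul_mem_rowFinset ha hb) (fun _ ha => inv_mem_rowFinset ha) _
        hτ).trans sTS_eq_card.symm
    rw [hcard, inv_mul_cancel₀ hs]
  · rw [filter_false_of_mem fun τ hτ hτm => h ⟨τ, hτ, hτm⟩, card_empty, Nat.cast_zero,
      mul_zero]

theorem isHomogeneous_rowOrbitSum :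
    (rowOrbitSum n T S).IsHomogeneous (∑ i ∈ Icc 1 n, ctEntry S (DsiSet n S) (posOf T i)) := by
  have hp : (pTS n T S).IsHomogeneous (∑ i ∈ Icc 1 n, ctEntry S (DsiSet n S) (posOf T i)) :=
    IsHomogeneous.prod _ _ _ fun i _ => isHomogeneous_X_pow i _
  rw [← mem_homogeneousSubmodule] at hp ⊢
  exact Submodule.smul_mem _ _ (Submodule.sum_mem _ fun τ _ => hp.rename_isHomogeneous)

end ctExp

theorem ccStat_eq_sum_ctEntry_posOf {cells : Finset (ℕ × ℕ)} {S T : Tab}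
    (hS : IsFillingF cells S) (hT : IsFillingF cells T) :
    ccStat #cells S = ∑ i ∈ Icc 1 #cells, ctEntry S (DsiSet #cells S) (posOf T i) := by
  rw [ccStat, hS.sum_posOf, hT.sum_posOf]

theorem smul_ctExp_eq_self_of_mem_colGroupSet {μ : YoungDiagram} {S T : Tab}
    (hS : IsStandard μ S) (hT : IsFilling μ T) {σ : Equiv.Perm ℕ}
    (hσ : σ ∈ colGroupSet #μ.cells T) {τ : Equiv.Perm (Fin #μ.cells)}
    (hτ : τ ∈ rowFinset #μ.cells T)
    (h : σ • ctExp #μ.cells T S = embedPerm #μ.cells τ • ctExp #μ.cells T S) :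
    σ • ctExp #μ.cells T S = ctExp #μ.cells T S := by
  obtain ⟨hσsupp, hσcol⟩ := hσ
  have hfix : ∀ i ∈ Icc 1 #μ.cells, σ⁻¹ i = i := by
    refine apply_eq_self_of_comp_colPerm_eq_comp_rowPerm (pos := posOf T)
      (d := ctExp #μ.cells T S) (τ := embedPerm _ τ⁻¹) hT.injOn_posOf ?_ (fun i hi => ?_)
      (fun i hi => ?_) (fun i _ => ?_)
    · intro i hi j hj hcol hrow
      rw [ctExp_apply_of_mem hi, ctExp_apply_of_mem hj]
      exact ctEntry_lt_of_col_eq_of_row_lt hS (hT.posOf_spec hi).1 (hT.posOf_spec hj).1 hcol hrow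
    · have hσi := hσsupp.inv_apply_mem_Icc hi
      have hcol := hσcol _ hσi
      rw [← Equiv.Perm.mul_apply, mul_inv_cancel, Equiv.Perm.one_apply] at hcol
      exact ⟨hσi, hcol.symm⟩
    · have hτ' := inv_mem_rowFinset hτ
      simp only [rowFinset, mem_filter, mem_univ, true_and] at hτ'
      exact ⟨embedPerm_mem_Icc _ hi, hτ' i hi⟩
    · simpa only [Finsupp.comapSMul_apply, embedPerm_inv, Equiv.Perm.smul_def]
        using congrArg (· i) h
  ext k
  rw [Finsupp.comapSMul_apply, Equiv.Perm.smul_def]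
  by_cases hk : k ∈ Icc 1 #μ.cells
  · rw [hfix k hk]
  · rw [Equiv.Perm.inv_eq_iff_eq.2 (hσsupp k (by simp only [mem_Icc] at hk; omega)).symm]

/-- `(1/s_T^S) Σ_{τ ∈ R(T)} τ p_T^S` is a sum of pairwise distinct
monomials with coefficient exactly `1`, all of degree `cc(S)` and with the same multiset of
exponents as `p_T^S`; `p_T^S` is among them; and no other monomial of the sum lies in the
`C(T)`-orbit of `p_T^S`. -/
theorem statement_16 (n : ℕ) (μ : YoungDiagram) (hμ : μ.cells.card = n) (S T : Tab)
    (hS : IsStandard μ S) (hT : IsFilling μ T) :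
    let G : MvPolynomial ℕ ℚ :=
      ((sTS n T S : ℚ)⁻¹) • ∑ τ ∈ rowFinset n T, rename (⇑(embedPerm n τ)) (pTS n T S)
    (∀ m : ℕ →₀ ℕ, G.coeff m = 0 ∨ G.coeff m = 1) ∧
    G.IsHomogeneous (ccStat n S) ∧
    (∀ m mp : ℕ →₀ ℕ, G.coeff m ≠ 0 → (monomial mp (1 : ℚ)) = pTS n T S →
      (Finset.Icc 1 n).val.map m = (Finset.Icc 1 n).val.map mp) ∧
    (∀ mp : ℕ →₀ ℕ, (monomial mp (1 : ℚ)) = pTS n T S → G.coeff mp = 1) ∧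
    (∀ σ : Equiv.Perm ℕ, σ ∈ colGroupSet n T → ∀ m : ℕ →₀ ℕ,
      rename (⇑σ) (pTS n T S) = monomial m 1 → G.coeff m ≠ 0 →
      (monomial m (1 : ℚ)) = pTS n T S) := by
  intro G
  subst hμ
  have hG : G = rowOrbitSum #μ.cells T S := rfl
  have hp : pTS #μ.cells T S = monomial (ctExp #μ.cells T S) 1 := pTS_eq_monomial
  have hmp : ∀ mp, monomial mp (1 : ℚ) = pTS #μ.cells T S → mp = ctExp #μ.cells T S :=
    fun mp h => monomial_left_injective one_ne_zero (h.trans hp)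
  have horbit : ∀ m, G.coeff m ≠ 0 →
      ∃ τ ∈ rowFinset #μ.cells T, embedPerm #μ.cells τ • ctExp #μ.cells T S = m := by
    intro m hm
    by_contra h
    exact hm (by rw [hG, coeff_rowOrbitSum, if_neg h])
  refine ⟨fun m => ?_, ?_, fun m mp hm h => ?_, fun mp h => ?_, fun σ hσ m hσm hm => ?_⟩
  · rw [hG, coeff_rowOrbitSum]
    split_ifs <;> simp
  · rw [ccStat_eq_sum_ctEntry_posOf hS.1 hT]
    exact isHomogeneous_rowOrbitSum
  · obtain ⟨τ, -, rfl⟩ := horbit m hm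
    rw [hmp mp h]
    exact map_embedPerm_smul τ _
  · rw [hmp mp h, hG, coeff_rowOrbitSum,
      if_pos ⟨1, one_mem_rowFinset, by rw [embedPerm_one, one_smul]⟩]
  · obtain ⟨τ, hτ, hτm⟩ := horbit m hm
    rw [hp, rename_monomial_perm, (monomial_left_injective one_ne_zero).eq_iff] at hσm
    rw [hp, ← hσm, smul_ctExp_eq_self_of_mem_colGroupSet hS hT hσ hτ (hσm.trans hτm.symm)]

end HigherSpecht
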